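/- Let φ be a measure-preserving map mixing with respect to a finite measure μ, {C_i} a nontrivial finite partition, and W_{i,j} = P_*[φ^{-1}(C_j)|C_i] the approximating transition matrix. For any initial distribution q(0) on the cells, the Markov-chain occupation probabilities q_j(n) = Σ_i q_i(0)(Wⁿ)_{i,j} converge as n → ∞ to P_*[C_j], the same limit as the exact occupation probabilities p_j(n) = P[φ^{-n}(C_j)] for any P ≪ μ. -/

import Mathlib

/-!
The chain part is Doeblin's argument. `W` is row-stochastic with stationary vector
`P_*[C_i]` because `φ` preserves `μ`, and a set `φ^{-n}(C_k) ∩ C_i` of positive measure forces a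
path `i → k` of length `n` with positive weights in `W`. Mixing makes all these sets eventually
of positive measure, so some power `W^N` has all entries `≥ δ > 0`; multiplying by `W^N` then
shrinks the spread `max - min` of every column by the factor `1 - 2δ`, which squeezes each
column of `Wⁿ` onto the stationary value.

For the exact chain write `P = f μ`. Mixing is the claim `∫_{φ^{-n} C_j} f dμ → P_*[C_j] ∫ f dμ`
for indicators `f`; it extends to all `f ∈ L¹` because the left side is `1`-Lipschitz in `f`
uniformly in `n`.
-/

open MeasureTheory Filter Set Topology Finset Matrix

section Spread

variable {I : Type*} [Fintype I] [Nonempty I]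

noncomputable def spread (u : I → ℝ) : ℝ :=
  univ.sup' univ_nonempty u - univ.inf' univ_nonempty u

lemma spread_nonneg (u : I → ℝ) : 0 ≤ spread u :=
  sub_nonneg.2 ((inf'_le u (mem_univ (Classical.arbitrary I))).trans (le_sup' u (mem_univ _)))

lemma dotProduct_mem_Icc_inf'_sup' {w : I → ℝ} (hw0 : ∀ i, 0 ≤ w i) (hw1 : ∑ i, w i = 1)
    (u : I → ℝ) : w ⬝ᵥ u ∈ Icc (univ.inf' univ_nonempty u) (univ.sup' univ_nonempty u) := by
  constructor
  · calc univ.inf' univ_nonempty u = ∑ i, w i * univ.inf' univ_nonempty u := by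
          rw [← sum_mul, hw1, one_mul]
      _ ≤ w ⬝ᵥ u :=
          sum_le_sum fun i _ => mul_le_mul_of_nonneg_left (inf'_le u (mem_univ i)) (hw0 i)
  · calc w ⬝ᵥ u ≤ ∑ i, w i * univ.sup' univ_nonempty u :=
          sum_le_sum fun i _ => mul_le_mul_of_nonneg_left (le_sup' u (mem_univ i)) (hw0 i)
      _ = univ.sup' univ_nonempty u := by rw [← sum_mul, hw1, one_mul]

lemma abs_sub_le_spread (u : I → ℝ) (i : I) {x : ℝ}
    (hx : x ∈ Icc (univ.inf' univ_nonempty u) (univ.sup' univ_nonempty u)) :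
    |u i - x| ≤ spread u := by
  unfold spread
  exact abs_sub_le_iff.2
    ⟨by linarith [le_sup' u (mem_univ i), hx.1], by linarith [inf'_le u (mem_univ i), hx.2]⟩

end Spread

namespace Matrix

variable {I : Type*} [Fintype I] [DecidableEq I] {M : Matrix I I ℝ}

lemma mulVec_apply_le_sub_of_le (hM : M ∈ rowStochastic ℝ I) {u : I → ℝ} {b : ℝ}
    (hu : ∀ k, u k ≤ b) (i k : I) : (M *ᵥ u) i ≤ b - M i k * (b - u k) := by
  have hsplit : (M *ᵥ u) i = b - ∑ l, M i l * (b - u l) := by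
    simp only [mulVec, dotProduct, mul_sub, sum_sub_distrib, ← sum_mul,
      sum_row_of_mem_rowStochastic hM, one_mul, sub_sub_cancel]
  rw [hsplit]
  exact sub_le_sub_left (single_le_sum (f := fun l => M i l * (b - u l))
    (fun l _ => mul_nonneg (hM.1 i l) (sub_nonneg.2 (hu l))) (mem_univ k)) b

lemma vecMul_pow_eq_self {π : I → ℝ} (hπM : π ᵥ* M = π) (n : ℕ) : π ᵥ* M ^ n = π := by
  induction n with
  | zero => simp
  | succ n ih => rw [pow_succ, ← vecMul_vecMul, ih, hπM]

variable [Nonempty I]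

/-- Each row average of `u` puts weight at least `δ` on both the minimum and the maximum of `u`. -/
lemma spread_mulVec_le (hM : M ∈ rowStochastic ℝ I) {δ : ℝ} (hδ : ∀ i k, δ ≤ M i k)
    (u : I → ℝ) : spread (M *ᵥ u) ≤ (1 - 2 * δ) * spread u := by
  obtain ⟨kmin, -, hkmin⟩ := exists_mem_eq_inf' univ_nonempty u
  obtain ⟨kmax, -, hkmax⟩ := exists_mem_eq_sup' univ_nonempty u
  set a := univ.inf' univ_nonempty u
  set b := univ.sup' univ_nonempty u
  have hab : 0 ≤ b - a := spread_nonneg u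
  have hupper : ∀ i, (M *ᵥ u) i ≤ b - δ * (b - a) := fun i => by
    have := mulVec_apply_le_sub_of_le hM (u := u) (b := b)
      (fun k => le_sup' u (mem_univ k)) i kmin
    rw [← hkmin] at this
    nlinarith [hδ i kmin]
  have hlower : ∀ i, a + δ * (b - a) ≤ (M *ᵥ u) i := fun i => by
    have := mulVec_apply_le_sub_of_le hM (u := -u) (b := -a)
      (fun k => neg_le_neg (inf'_le u (mem_univ k))) i kmax
    rw [mulVec_neg, Pi.neg_apply, Pi.neg_apply, ← hkmax] at this
    nlinarith [hδ i kmax]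
  have h1 := sup'_le univ_nonempty _ fun i _ => hupper i
  have h2 := le_inf' univ_nonempty _ fun i _ => hlower i
  unfold spread
  linarith

lemma tendsto_spread_pow_mulVec (hM : M ∈ rowStochastic ℝ I) {N : ℕ}
    (hN : ∀ i k, 0 < (M ^ N) i k) (u : I → ℝ) :
    Tendsto (fun n => spread (M ^ n *ᵥ u)) atTop (𝓝 0) := by
  set s := fun n => spread (M ^ n *ᵥ u)
  have hanti : Antitone s := antitone_nat_of_succ_le fun n => by
    simpa [s, pow_succ', ← mulVec_mulVec] using
      spread_mulVec_le hM (δ := 0) (fun i k => hM.1 i k) (M ^ n *ᵥ u)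
  obtain ⟨δ, hδN, hδ0, hδ1⟩ : ∃ δ : ℝ, (∀ i k, δ ≤ (M ^ N) i k) ∧ 0 < δ ∧ δ < 1 / 2 := by
    have hev : ∀ᶠ δ in 𝓝[>] (0 : ℝ), ∀ i k, δ ≤ (M ^ N) i k :=
      nhdsWithin_le_nhds <| eventually_all.2 fun i => eventually_all.2 fun k =>
        eventually_le_nhds (hN i k)
    exact (hev.and <| eventually_mem_nhdsWithin.and <|
      nhdsWithin_le_nhds (eventually_lt_nhds (by norm_num))).exists
  have hgeom : ∀ k, s (N * k) ≤ (1 - 2 * δ) ^ k * s 0 := by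
    intro k
    induction k with
    | zero => simp
    | succ k ih =>
      calc s (N * (k + 1)) ≤ (1 - 2 * δ) * s (N * k) := by
            rw [show N * (k + 1) = N + N * k by ring]
            simpa [s, pow_add, ← mulVec_mulVec] using
              spread_mulVec_le (pow_mem hM N) hδN (M ^ (N * k) *ᵥ u)
        _ ≤ (1 - 2 * δ) * ((1 - 2 * δ) ^ k * s 0) :=
            mul_le_mul_of_nonneg_left ih (by linarith)
        _ = (1 - 2 * δ) ^ (k + 1) * s 0 := by ring
  refine tendsto_order.2 ⟨fun a ha => Eventually.of_forall fun n => ha.trans_le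
    (spread_nonneg _), fun ε hε => ?_⟩
  have hpow := tendsto_pow_atTop_nhds_zero_of_lt_one (r := 1 - 2 * δ) (by linarith) (by linarith)
  obtain ⟨k, hk⟩ :=
    ((hpow.mul_const (s 0)).eventually (gt_mem_nhds (by simpa using hε))).exists
  filter_upwards [eventually_ge_atTop (N * k)] with n hn
  exact ((hanti hn).trans (hgeom k)).trans_lt hk

theorem tendsto_pow_apply_of_pos (hM : M ∈ rowStochastic ℝ I) {π : I → ℝ}
    (hπ0 : ∀ i, 0 ≤ π i) (hπ1 : ∑ i, π i = 1) (hπM : π ᵥ* M = π) {N : ℕ}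
    (hN : ∀ i k, 0 < (M ^ N) i k) (i j : I) :
    Tendsto (fun n => (M ^ n) i j) atTop (𝓝 (π j)) := by
  have hπ : ∀ n, π j = π ⬝ᵥ (M ^ n *ᵥ Pi.single j 1) := fun n => by
    rw [dotProduct_mulVec, vecMul_pow_eq_self hπM, dotProduct_single_one]
  rw [tendsto_iff_norm_sub_tendsto_zero]
  refine squeeze_zero (fun _ => norm_nonneg _) (fun n => ?_)
    (tendsto_spread_pow_mulVec hM hN (Pi.single j 1))
  rw [Real.norm_eq_abs, hπ n]
  simpa [mulVec_single_one] using
    abs_sub_le_spread ((M ^ n).col j) i (dotProduct_mem_Icc_inf'_sup' hπ0 hπ1 _)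

end Matrix

section Partition

variable {X : Type*} [MeasurableSpace X] {I : Type*}

structure IsMeasurablePartition (C : I → Set X) : Prop where
  measurableSet : ∀ i, MeasurableSet (C i)
  pairwise_disjoint : Pairwise (Function.onFun Disjoint C)
  iUnion_eq_univ : ⋃ i, C i = univ

namespace IsMeasurablePartition

variable {C : I → Set X}

lemma preimage (hC : IsMeasurablePartition C) {φ : X → X} (hφ : Measurable φ) :
    IsMeasurablePartition fun i => φ ⁻¹' C i where
  measurableSet i := hφ (hC.measurableSet i)
  pairwise_disjoint _ _ hik := (hC.pairwise_disjoint hik).preimage φ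
  iUnion_eq_univ := by rw [← preimage_iUnion, hC.iUnion_eq_univ, preimage_univ]

lemma sum_measureReal_inter [Fintype I] (hC : IsMeasurablePartition C) (μ : Measure X)
    [IsFiniteMeasure μ] {s : Set X} (hs : MeasurableSet s) : ∑ i, μ.real (s ∩ C i) = μ.real s := by
  rw [← measureReal_iUnion_fintype
    (fun _ _ hik => (hC.pairwise_disjoint hik).mono inter_subset_right inter_subset_right)
    (fun i => hs.inter (hC.measurableSet i)), ← inter_iUnion, hC.iUnion_eq_univ, inter_univ]

end IsMeasurablePartition

lemma exists_measure_inter_pos_of_iUnion_eq_univ [Countable I] {C : I → Set X}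
    (hC : ⋃ i, C i = univ) {μ : Measure X} {s : Set X} (hs : 0 < μ s) : ∃ i, 0 < μ (s ∩ C i) := by
  by_contra! h
  have : μ (⋃ i, s ∩ C i) = 0 := measure_iUnion_null_iff.2 fun i => nonpos_iff_eq_zero.1 (h i)
  rw [← inter_iUnion, hC, inter_univ] at this
  exact hs.ne' this

end Partition

section TransitionMatrix

variable {X : Type*} [MeasurableSpace X] {I : Type*} [Fintype I]

noncomputable def transitionMatrix (μ : Measure X) (φ : X → X) (C : I → Set X) :
    Matrix I I ℝ :=
  fun i j => μ.real (φ ⁻¹' C j ∩ C i) / μ.real (C i)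

def IsMixing (μ : Measure X) (φ : X → X) : Prop :=
  ∀ A B : Set X, MeasurableSet A → MeasurableSet B →
    Tendsto (fun n => μ.real (φ^[n] ⁻¹' A ∩ B)) atTop (𝓝 (μ.real A / μ.real univ * μ.real B))

variable {μ : Measure X} [IsFiniteMeasure μ] {φ : X → X} {C : I → Set X}

lemma measureReal_pos_of_pos {s : Set X} (hs : 0 < μ s) : 0 < μ.real s :=
  ENNReal.toReal_pos hs.ne' (measure_ne_top μ s)

lemma transitionMatrix_mem_rowStochastic [DecidableEq I] (hφ : Measurable φ)
    (hC : IsMeasurablePartition C) (hpos : ∀ i, 0 < μ (C i)) :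
    transitionMatrix μ φ C ∈ rowStochastic ℝ I := by
  refine mem_rowStochastic_iff_sum.2 ⟨fun i k => by unfold transitionMatrix; positivity,
    fun i => ?_⟩
  have hrow := (hC.preimage hφ).sum_measureReal_inter μ (hC.measurableSet i)
  simp only [inter_comm (C i)] at hrow
  simp only [transitionMatrix, ← sum_div]
  rw [hrow, div_self (measureReal_pos_of_pos (hpos i)).ne']

lemma vecMul_transitionMatrix (hφ : MeasurePreserving φ μ μ) (hC : IsMeasurablePartition C)
    (hpos : ∀ i, 0 < μ (C i)) :
    (fun i => μ.real (C i) / μ.real univ) ᵥ* transitionMatrix μ φ C =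
      fun i => μ.real (C i) / μ.real univ := by
  funext k
  have hcancel : ∀ i, μ.real (C i) / μ.real univ * transitionMatrix μ φ C i k =
      μ.real (φ ⁻¹' C k ∩ C i) / μ.real univ := fun i => by
    have := (measureReal_pos_of_pos (hpos i)).ne'
    unfold transitionMatrix
    field_simp
  simp only [vecMul, dotProduct, hcancel, ← sum_div]
  rw [hC.sum_measureReal_inter μ (hφ.measurable (hC.measurableSet k)),
    hφ.measureReal_preimage (hC.measurableSet k).nullMeasurableSet]

lemma transitionMatrix_pow_apply_pos [DecidableEq I] (hφ : MeasurePreserving φ μ μ)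
    (hC : IsMeasurablePartition C) (hpos : ∀ i, 0 < μ (C i)) (n : ℕ) (i k : I)
    (h : 0 < μ (φ^[n] ⁻¹' C k ∩ C i)) : 0 < (transitionMatrix μ φ C ^ n) i k := by
  induction n generalizing i with
  | zero =>
    obtain rfl : i = k := by
      by_contra hik
      simp [(hC.pairwise_disjoint hik).symm.inter_eq] at h
    simp
  | succ n ih =>
    rw [Function.iterate_succ, preimage_comp] at h
    obtain ⟨m, hm⟩ := exists_measure_inter_pos_of_iUnion_eq_univ
      (hC.preimage hφ.measurable).iUnion_eq_univ h
    have him : 0 < transitionMatrix μ φ C i m :=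
      div_pos (measureReal_pos_of_pos (hm.trans_le (measure_mono fun x hx => ⟨hx.2, hx.1.2⟩)))
        (measureReal_pos_of_pos (hm.trans_le (measure_mono fun x hx => hx.1.2)))
    have hmk : 0 < (transitionMatrix μ φ C ^ n) m k := by
      refine ih m (hm.trans_le ?_)
      have hmeas := (hφ.measurable.iterate n (hC.measurableSet k)).inter (hC.measurableSet m)
      rw [← hφ.measure_preimage hmeas.nullMeasurableSet]
      exact measure_mono fun x hx => ⟨hx.1.1, hx.2⟩
    set W := transitionMatrix μ φ C
    have hW : W ∈ rowStochastic ℝ I := transitionMatrix_mem_rowStochastic hφ.measurable hC hpos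
    rw [pow_succ', mul_apply]
    exact (mul_pos him hmk).trans_le <| single_le_sum (f := fun l => W i l * (W ^ n) l k)
      (fun l _ => mul_nonneg (hW.1 i l) ((pow_mem hW n).1 l k)) (mem_univ m)

lemma IsMixing.exists_transitionMatrix_pow_pos [DecidableEq I] (hmix : IsMixing μ φ)
    (hφ : MeasurePreserving φ μ μ) (hC : IsMeasurablePartition C) (hpos : ∀ i, 0 < μ (C i)) :
    ∃ N, ∀ i k, 0 < (transitionMatrix μ φ C ^ N) i k := by
  have hev : ∀ᶠ n in atTop, ∀ i k, 0 < μ.real (φ^[n] ⁻¹' C k ∩ C i) :=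
    eventually_all.2 fun i => eventually_all.2 fun k =>
      have hCi := measureReal_pos_of_pos (hpos i)
      (hmix _ _ (hC.measurableSet k) (hC.measurableSet i)).eventually <| lt_mem_nhds <|
        mul_pos (div_pos (measureReal_pos_of_pos (hpos k))
          (hCi.trans_le (measureReal_mono (subset_univ _)))) hCi
  obtain ⟨N, hN⟩ := hev.exists
  exact ⟨N, fun i k => transitionMatrix_pow_apply_pos hφ hC hpos N i k
    (ENNReal.toReal_pos_iff.1 (hN i k)).1⟩

end TransitionMatrix

section SetIntegral

variable {X : Type*} [MeasurableSpace X] {μ : Measure X}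

lemma dist_setIntegral_le {E : Type*} [NormedAddCommGroup E] [NormedSpace ℝ E] (s : Set X)
    (F G : X →₁[μ] E) : dist (∫ x in s, F x ∂μ) (∫ x in s, G x ∂μ) ≤ dist F G := by
  rw [dist_eq_norm, dist_eq_norm, ← integral_sub (L1.integrable_coeFn F).integrableOn
    (L1.integrable_coeFn G).integrableOn, L1.norm_eq_integral_norm]
  calc ‖∫ x in s, F x - G x ∂μ‖ ≤ ∫ x in s, ‖F x - G x‖ ∂μ := norm_integral_le_integral_norm _
    _ ≤ ∫ x, ‖F x - G x‖ ∂μ :=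
        setIntegral_le_integral ((L1.integrable_coeFn F).sub (L1.integrable_coeFn G)).norm
          (Eventually.of_forall fun _ => norm_nonneg _)
    _ = ∫ x, ‖(F - G) x‖ ∂μ :=
        integral_congr_ae <| (Lp.coeFn_sub F G).mono fun x hx => by simp only [hx, Pi.sub_apply]

lemma isClosed_setOf_tendsto_setIntegral (A : ℕ → Set X) (c : ℝ) :
    IsClosed {F : X →₁[μ] ℝ |
      Tendsto (fun n => ∫ x in A n, F x ∂μ) atTop (𝓝 (c * ∫ x, F x ∂μ))} := by
  refine IsSeqClosed.isClosed fun F G hF hFG => ?_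
  refine TendstoUniformly.tendsto_of_eventually_tendsto (F := fun k n => ∫ x in A n, F k x ∂μ)
    ?_ (Eventually.of_forall hF) (((continuous_integral.tendsto G).comp hFG).const_mul c)
  rw [Metric.tendstoUniformly_iff]
  intro ε hε
  filter_upwards [Metric.tendsto_nhds.1 hFG ε hε] with k hk n
  exact (dist_setIntegral_le (A n) G (F k)).trans_lt (by rwa [dist_comm])

theorem tendsto_setIntegral_of_tendsto_measureReal_inter {A : ℕ → Set X} {c : ℝ}
    (hA : ∀ s, MeasurableSet s → μ s < ⊤ →
      Tendsto (fun n => μ.real (A n ∩ s)) atTop (𝓝 (c * μ.real s)))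
    {f : X → ℝ} (hf : Integrable f μ) :
    Tendsto (fun n => ∫ x in A n, f x ∂μ) atTop (𝓝 (c * ∫ x, f x ∂μ)) := by
  refine hf.induction
    (P := fun g => Tendsto (fun n => ∫ x in A n, g x ∂μ) atTop (𝓝 (c * ∫ x, g x ∂μ)))
    (fun e s hs hμs => ?_) (fun f g _ hf hg hPf hPg => ?_)
    (isClosed_setOf_tendsto_setIntegral A c) (fun f g hfg _ hPf => ?_)
  · simp only [setIntegral_indicator hs, integral_indicator_const _ hs, setIntegral_const,
      smul_eq_mul]
    simpa only [mul_assoc] using (hA _ hs hμs).mul_const e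
  · simp only [Pi.add_apply, integral_add hf hg, integral_add hf.integrableOn hg.integrableOn,
      mul_add]
    exact hPf.add hPg
  · rw [← integral_congr_ae hfg]
    simpa only [integral_congr_ae (ae_restrict_of_ae hfg)] using hPf

lemma IsMixing.tendsto_measureReal_preimage_iterate [IsFiniteMeasure μ] {φ : X → X}
    (hmix : IsMixing μ φ) {P : Measure X} [IsFiniteMeasure P] (hPμ : P ≪ μ) {A : Set X}
    (hA : MeasurableSet A) :
    Tendsto (fun n => P.real (φ^[n] ⁻¹' A)) atTop
      (𝓝 (μ.real A / μ.real univ * P.real univ)) := by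
  simpa only [Measure.setIntegral_toReal_rnDeriv hPμ, Measure.integral_toReal_rnDeriv hPμ] using
    tendsto_setIntegral_of_tendsto_measureReal_inter (fun s hs _ => hmix A s hA hs)
      (Measure.integrable_toReal_rnDeriv (μ := P) (ν := μ))

end SetIntegral

theorem approximating_chain_same_limit
    {X : Type*} [MeasurableSpace X] {I : Type*} [Fintype I] [DecidableEq I]
    (μ : Measure X) [IsFiniteMeasure μ]
    (φ : X → X) (hφ : MeasurePreserving φ μ μ)
    (hmix : ∀ A B : Set X, MeasurableSet A → MeasurableSet B →
      Tendsto (fun n => (μ (φ^[n] ⁻¹' A ∩ B)).toReal) atTop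
        (𝓝 ((μ A).toReal / (μ Set.univ).toReal * (μ B).toReal)))
    (C : I → Set X) (hmeas : ∀ i, MeasurableSet (C i))
    (hdisj : Pairwise (Function.onFun Disjoint C)) (hcover : ⋃ i, C i = Set.univ)
    (hpos : ∀ i, 0 < μ (C i))
    (W : Matrix I I ℝ)
    (hW : ∀ i j, W i j = (μ (φ ⁻¹' (C j) ∩ C i)).toReal / (μ (C i)).toReal)
    (j : I) :
    (∀ q0 : I → ℝ, (∀ i, 0 ≤ q0 i) → ∑ i, q0 i = 1 →
      Tendsto (fun n => ∑ i, q0 i * (W ^ n) i j) atTop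
        (𝓝 ((μ (C j)).toReal / (μ Set.univ).toReal))) ∧
    (∀ P : Measure X, IsProbabilityMeasure P → P ≪ μ →
      Tendsto (fun n => (P (φ^[n] ⁻¹' (C j))).toReal) atTop
        (𝓝 ((μ (C j)).toReal / (μ Set.univ).toReal))) := by
  have : Nonempty I := ⟨j⟩
  have hmix' : IsMixing μ φ := hmix
  obtain rfl : W = transitionMatrix μ φ C := Matrix.ext hW
  have hC : IsMeasurablePartition C := ⟨hmeas, hdisj, hcover⟩
  simp only [← measureReal_def]
  have huniv : 0 < μ.real univ :=
    (measureReal_pos_of_pos (hpos j)).trans_le (measureReal_mono (subset_univ _))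
  have hπ1 : ∑ i, μ.real (C i) / μ.real univ = 1 := by
    rw [← sum_div, div_eq_one_iff_eq huniv.ne', ← hC.sum_measureReal_inter μ MeasurableSet.univ]
    simp only [univ_inter]
  obtain ⟨N, hN⟩ := hmix'.exists_transitionMatrix_pow_pos hφ hC hpos
  refine ⟨fun q0 _ hq1 => ?_, fun P _ hPμ => ?_⟩
  · have hlim := tendsto_pow_apply_of_pos
      (transitionMatrix_mem_rowStochastic hφ.measurable hC hpos) (fun i => by positivity) hπ1
      (vecMul_transitionMatrix hφ hC hpos) hN
    simpa only [← sum_mul, hq1, one_mul] using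
      tendsto_finsetSum univ fun i _ => (hlim i j).const_mul (q0 i)
  · simpa using hmix'.tendsto_measureReal_preimage_iterate hPμ (hmeas j)
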